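/- arXiv:2410.17575 — 2 statements merged into one kernel-verified Lean document; each statement's English description precedes it below -/
import Mathlib

section
/- Let φ ∈ S̃ and let σ₁ > σ_φ. Then for almost every ω ∈ Ω (with respect to the Haar measure m), there exists a constant C(σ₁, ω) > 0 such that |φ(s, ω)| ≤ C(σ₁, ω)(|t| + 2) for all s = σ + it with σ ≥ σ₁. -/
open Complex MeasureTheory Filter Topology

noncomputable section

/-- The open vertical strip `a < Re s < b`. -/
def Strip (a b : ℝ) : Set ℂ := {s : ℂ | a < s.re ∧ s.re < b}

/-- The space `H(D)` of holomorphic functions on `D`, realized as continuous maps on the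
subspace `D` (with the compact-open topology, i.e. the topology of locally uniform
convergence) which are restrictions of functions holomorphic on `D`. -/
def Hol (D : Set ℂ) : Type :=
  {f : C(D, ℂ) // ∃ F : ℂ → ℂ, DifferentiableOn ℂ F D ∧ ∀ z : D, f z = F z}

instance (D : Set ℂ) : TopologicalSpace (Hol D) :=
  instTopologicalSpaceSubtype

instance (D : Set ℂ) : Inhabited (Hol D) :=
  ⟨⟨⟨fun _ => 0, continuous_const⟩, fun _ => 0, differentiableOn_const 0, fun _ => rfl⟩⟩

instance (D : Set ℂ) : MeasurableSpace (Hol D) := borel _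

instance (D : Set ℂ) : BorelSpace (Hol D) := ⟨rfl⟩

open scoped Classical in
/-- Package a function `ℂ → ℂ` as an element of `H(D)`, provided it is holomorphic
(and continuous) on `D`; junk value otherwise. -/
def toHol (D : Set ℂ) (f : ℂ → ℂ) : Hol D :=
  if h : DifferentiableOn ℂ f D ∧ ContinuousOn f D then
    ⟨⟨D.restrict f, h.2.restrict⟩, f, h.1, fun _ => rfl⟩
  else default

instance : MeasurableSpace Circle := borel _
instance : BorelSpace Circle := ⟨rfl⟩

/-- `Ω = ∏_p 𝕋_p`, the product over all primes of copies of the unit circle `𝕋`. -/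
abbrev ProdCircle : Type := Nat.Primes → Circle

/-- The probability Haar measure `m` on `Ω = ∏_p 𝕋_p`. -/
def haarOmega : Measure ProdCircle := Measure.haar

/-- The probability Haar measure on the unit circle `𝕋`. -/
def haarCircle : Measure Circle := Measure.haar

/-- The support of a measure: the set of points all of whose open neighbourhoods have
positive measure. -/
def msupport {α : Type*} [TopologicalSpace α] [MeasurableSpace α] (μ : Measure α) : Set α :=
  {x | ∀ U : Set α, IsOpen U → x ∈ U → 0 < μ U}

/-- Distance from a real number to the nearest integer, `‖x‖`. -/
def nint (x : ℝ) : ℝ := |x - round x|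

/-- The `i`-th prime number, as an element of `Nat.Primes`. -/
def nthPrime (i : ℕ) : Nat.Primes := ⟨Nat.nth Nat.Prime i, Nat.prime_nth_prime i⟩

/-- The class `S̃` of Dirichlet series `φ(s) = ∑ a_φ(n) n^{-s}` satisfying
(S1) the Ramanujan hypothesis, (S2) meromorphic continuation to a half-plane
`Re s > σ₁(φ)` with `σ₁(φ) < 1`, holomorphic except for at most a pole at `s = 1`,
(S3) finite order (polynomial growth in vertical strips), and
(S4) a polynomial Euler product. The field `toFun` is the (meromorphically continued)
function itself. -/
structure SClassTilde where
  /-- the Dirichlet coefficients `a_φ(n)` -/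
  a : ℕ → ℂ
  /-- the (analytically continued) function `φ` -/
  toFun : ℂ → ℂ
  /-- the degree `m_φ` of the polynomial Euler product -/
  m : ℕ
  m_pos : 0 < m
  /-- the local roots `α_{j,φ}(p)` of the Euler product -/
  α : Fin m → Nat.Primes → ℂ
  /-- the abscissa `σ₁(φ) < 1` of the meromorphic continuation -/
  σ₁ : ℝ
  σ₁_lt_one : σ₁ < 1
  /-- (S1) Ramanujan hypothesis: `a_φ(n) ≪_ε n^ε` -/
  hS1 : ∀ ε : ℝ, 0 < ε → ∃ C : ℝ, 0 < C ∧ ∀ n : ℕ, 1 ≤ n → ‖a n‖ ≤ C * (n : ℝ) ^ ε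
  /-- the Dirichlet series converges for `Re s > 1` … -/
  hsum : ∀ s : ℂ, 1 < s.re → LSeriesSummable a s
  /-- … and represents `φ` there -/
  hser : ∀ s : ℂ, 1 < s.re → toFun s = LSeries a s
  /-- (S2) analytic continuation: `φ` is holomorphic on `Re s > σ₁` except possibly at `s = 1` … -/
  hS2 : DifferentiableOn ℂ toFun ({s : ℂ | σ₁ < s.re} \ {1})
  /-- … where it has at most a pole -/
  hS2' : ∃ (k : ℕ) (c : ℂ),
    Filter.Tendsto (fun s : ℂ => (s - 1) ^ k * toFun s) (nhdsWithin 1 {(1 : ℂ)}ᶜ) (nhds c)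
  /-- (S3) finite order: polynomial growth in vertical strips -/
  hS3 : ∀ σa σb : ℝ, σ₁ < σa → σa < σb → ∃ C : ℝ, 0 < C ∧ ∃ T₀ : ℝ, 0 < T₀ ∧
    ∀ s : ℂ, σa ≤ s.re → s.re ≤ σb → T₀ ≤ |s.im| → ‖toFun s‖ ≤ C * |s.im| ^ C
  /-- (S4) polynomial Euler product -/
  hS4 : ∀ s : ℂ, 1 < s.re →
    HasProd (fun p : Nat.Primes => ∏ j : Fin m, (1 - α j p * ((p : ℕ) : ℂ) ^ (-s))⁻¹) (toFun s)

namespace SClassTilde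

/-- The mean-square asymptotic
`(1/2T) ∫_{-T}^{T} |φ(σ+it)|² dt → ∑_{n≥1} |a_φ(n)|² n^{-2σ}` at the abscissa `σ`. -/
def msOK (φ : SClassTilde) (σ : ℝ) : Prop :=
  Filter.Tendsto
    (fun T : ℝ => (1 / (2 * T)) * ∫ t in (-T)..T, ‖φ.toFun (σ + t * Complex.I)‖ ^ 2)
    Filter.atTop (nhds (∑' n : ℕ, ‖φ.a n‖ ^ 2 / (n : ℝ) ^ (2 * σ)))

/-- `σ_φ`, the infimum of all `σ₂ ≥ 1/2` such that the mean-square asymptotic holds for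
every `σ ≥ σ₂`. (The value `1` is always admissible.) -/
def σφ (φ : SClassTilde) : ℝ :=
  sInf ({σ₂ : ℝ | 1 / 2 ≤ σ₂ ∧ ∀ σ : ℝ, σ₂ ≤ σ → φ.msOK σ} ∪ {1})

/-- The strip `D_φ = {s : σ_φ < Re s < 1}`. -/
def domain (φ : SClassTilde) : Set ℂ := Strip φ.σφ 1

/-- The multiplicative extension `ω(n)` of `ω ∈ Ω` to all positive integers. -/
def omegaMul (ω : ProdCircle) (n : ℕ) : ℂ :=
  n.factorization.prod fun p e =>
    (if hp : p.Prime then ((ω ⟨p, hp⟩ : Circle) : ℂ) else 1) ^ e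

/-- The random Euler product `φ(s, ω) = ∏_p ∏_j (1 - α_{j,φ}(p) ω(p) p^{-s})⁻¹`. -/
def randEuler (φ : SClassTilde) (ω : ProdCircle) : ℂ → ℂ := fun s =>
  ∏' p : Nat.Primes, ∏ j : Fin φ.m, (1 - φ.α j p * (ω p : ℂ) * ((p : ℕ) : ℂ) ^ (-s))⁻¹

/-- The random Dirichlet series `φ(s, ω) = ∑_{n≥1} a_φ(n) ω(n) n^{-s}`. -/
def randSeries (φ : SClassTilde) (ω : ProdCircle) : ℂ → ℂ := fun s =>
  ∑' n : ℕ, φ.a n * omegaMul ω n / (n : ℂ) ^ s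

/-- `log φ_p(s, z) = -∑_{j=1}^{m_φ} Log (1 - α_{j,φ}(p) z p^{-s})`, with the principal
branch of the logarithm. -/
def logFactor (φ : SClassTilde) (p : Nat.Primes) (z : ℂ) (s : ℂ) : ℂ :=
  -∑ j : Fin φ.m, Complex.log (1 - φ.α j p * z * ((p : ℕ) : ℂ) ^ (-s))

/-- The random logarithm `log φ(s, ω) = ∑_p log φ_p(s, ω(p))` (primes summed in increasing
order; junk value where the series diverges). -/
def logRand (φ : SClassTilde) (ω : ProdCircle) : ℂ → ℂ := fun s =>
  limUnder Filter.atTop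
    (fun M : ℕ => ∑ i ∈ Finset.range M, logFactor φ (nthPrime i) (ω (nthPrime i)) s)

end SClassTilde

/-- The denseness assumption of the main theorem: for every `X > 0`, the set of all
convergent tuples `(∑_{p > X} a_{φ_j}(p) c(p) p^{-s})_{j=1}^r` with `c(p) ∈ 𝕋` is dense in
`∏_j H(D_{φ_j})`; convergence in `H(D_{φ_j})` is locally uniform convergence on `D_{φ_j}`
of the partial sums over the primes in increasing order. -/
def DenseTails {r : ℕ} (φ : Fin r → SClassTilde) : Prop :=
  ∀ X : ℝ, 0 < X →
    Dense {g : ∀ j : Fin r, Hol (φ j).domain |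
      ∃ c : Nat.Primes → Circle, ∀ j,
        TendstoLocallyUniformly
          (fun (M : ℕ) (z : (φ j).domain) => ∑ i ∈ Finset.range M,
            if X < ((nthPrime i : ℕ) : ℝ) then
              (φ j).a (nthPrime i) * (c (nthPrime i) : ℂ) * (((nthPrime i : ℕ) : ℂ)) ^ (-(z : ℂ))
            else 0)
          (fun z => (g j).val z) Filter.atTop}

/-! Fix `1/2 ≤ σ_φ < σ₀ < σ₁` and put `γ(n) = a_φ(n) n^{-σ₀}`, so that
`|γ(n)| ≪ n^{-1/2-η}` for some `η > 0`.
The functions `ω ↦ ω(n)` are orthogonal in `L²(m)`, hence every sum of `γ(n) ω(n)` over a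
segment of `[2^k, 2^{k+1})` has mean square at most `∑_{2^k ≤ n < 2^{k+1}} |γ(n)|² ≪ 2^{-2ηk}`.
Chaining over dyadic sub-blocks (Rademacher–Menshov) bounds all partial sums inside
`[2^k, 2^{k+1})` at once by a random variable whose `L²` norm is `≪ (k + 1) 2^{-ηk}`; these
are summable in `k`, so almost surely the partial sums of `∑ γ(n) ω(n)` are bounded. Partial
summation against `n^{-(s-σ₀)}`, which is bounded by `1` and has total variation at most
`1 + |s - σ₀| / (σ - σ₀)`, then gives the bound, linear in `|t|`, for every partial sum of
`∑ a_φ(n) ω(n) n^{-s}` and hence for its `tsum` (which is `0` where the series is not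
summable). -/

instance : IsFiniteMeasure haarOmega := by unfold haarOmega; infer_instance

instance : haarOmega.IsMulLeftInvariant := by unfold haarOmega; infer_instance

lemma norm_tsum_le_of_forall_norm_sum_range_le {E : Type*} [NormedAddCommGroup E] {f : ℕ → E}
    {C : ℝ} (h : ∀ M, ‖∑ n ∈ Finset.range M, f n‖ ≤ C) : ‖∑' n, f n‖ ≤ C := by
  by_cases hf : Summable f
  · exact le_of_tendsto' hf.hasSum.tendsto_sum_nat.norm h
  · simpa [tsum_eq_zero_of_not_summable hf] using h 0

lemma norm_sum_range_smul_le {𝕜 E : Type*} [NormedField 𝕜] [SeminormedAddCommGroup E]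
    [NormedSpace 𝕜 E] {b : ℕ → 𝕜} {Y : ℕ → E} {B β V : ℝ}
    (hY : ∀ M, ‖∑ n ∈ Finset.range M, Y n‖ ≤ B) (hb : ∀ n, ‖b n‖ ≤ β)
    (hV : ∀ N, ∑ i ∈ Finset.range N, ‖b (i + 1) - b i‖ ≤ V) (M : ℕ) :
    ‖∑ n ∈ Finset.range M, b n • Y n‖ ≤ (β + V) * B := by
  have hB : 0 ≤ B := by simpa using hY 0
  have hβ : 0 ≤ β := (norm_nonneg _).trans (hb 0)
  rw [Finset.sum_range_by_parts, add_mul]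
  refine (norm_sub_le _ _).trans (add_le_add ?_ ?_)
  · exact (norm_smul_le _ _).trans (mul_le_mul (hb _) (hY M) (norm_nonneg _) hβ)
  · calc _ ≤ ∑ i ∈ Finset.range (M - 1), ‖b (i + 1) - b i‖ * B :=
          (norm_sum_le _ _).trans <| Finset.sum_le_sum fun i _ =>
            (norm_smul_le _ _).trans (mul_le_mul_of_nonneg_left (hY _) (norm_nonneg _))
      _ ≤ V * B := by
          rw [← Finset.sum_mul]
          exact mul_le_mul_of_nonneg_right (hV _) hB

lemma norm_natCast_cpow_neg_le_one {w : ℂ} (hw : 0 ≤ w.re) (n : ℕ) : ‖(n : ℂ) ^ (-w)‖ ≤ 1 := by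
  rcases Nat.eq_zero_or_pos n with rfl | hn
  · by_cases hw0 : w = 0
    · simp [hw0]
    · simp [Complex.zero_cpow (neg_ne_zero.mpr hw0)]
  · rw [Complex.norm_natCast_cpow_of_pos hn]
    exact Real.rpow_le_one_of_one_le_of_nonpos (by exact_mod_cast hn) (by simpa using hw)

lemma norm_ofReal_cpow_neg_sub_le {x y : ℝ} (hx : 0 < x) (hxy : x ≤ y) {w : ℂ} (hw : 0 < w.re) :
    ‖(y : ℂ) ^ (-w) - (x : ℂ) ^ (-w)‖ ≤ ‖w‖ / w.re * (x ^ (-w.re) - y ^ (-w.re)) := by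
  have hw0 : w ≠ 0 := fun h => by simp [h] at hw
  have h0 : (0 : ℝ) ∉ Set.uIcc x y := by
    rw [Set.uIcc_of_le hxy]
    exact fun h => hx.not_ge h.1
  have hc := integral_cpow (a := x) (b := y) (r := -w - 1)
    (.inr ⟨fun h => hw0 (by linear_combination -h), h0⟩)
  have hr := integral_rpow (a := x) (b := y) (r := -w.re - 1)
    (.inr ⟨fun h => hw.ne' (by linarith), h0⟩)
  simp only [sub_add_cancel] at hc hr
  have hdiff : (y : ℂ) ^ (-w) - (x : ℂ) ^ (-w) = -w * ∫ t in x..y, (t : ℂ) ^ (-w - 1) := by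
    rw [hc]
    field_simp
  have hnorm : ∫ t in x..y, ‖(t : ℂ) ^ (-w - 1)‖ = ∫ t in x..y, t ^ (-w.re - 1) :=
    intervalIntegral.integral_congr fun t ht => by
      rw [Set.uIcc_of_le hxy] at ht
      simp [Complex.norm_cpow_eq_rpow_re_of_pos (hx.trans_le ht.1)]
  calc ‖(y : ℂ) ^ (-w) - (x : ℂ) ^ (-w)‖
      ≤ ‖w‖ * ∫ t in x..y, ‖(t : ℂ) ^ (-w - 1)‖ := by
        rw [hdiff, norm_mul, norm_neg]
        exact mul_le_mul_of_nonneg_left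
          (intervalIntegral.norm_integral_le_integral_norm hxy) (norm_nonneg _)
    _ = ‖w‖ / w.re * (x ^ (-w.re) - y ^ (-w.re)) := by
        rw [hnorm, hr]
        field_simp
        ring

lemma sum_range_norm_natCast_cpow_neg_sub_le {w : ℂ} (hw : 0 < w.re) (N : ℕ) :
    ∑ i ∈ Finset.range N, ‖((i + 1 : ℕ) : ℂ) ^ (-w) - (i : ℂ) ^ (-w)‖ ≤ 1 + ‖w‖ / w.re := by
  have hw0 : w ≠ 0 := fun h => by simp [h] at hw
  set r : ℕ → ℝ := fun n => (n : ℝ) ^ (-w.re)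
  cases N with
  | zero => simp only [Finset.range_zero, Finset.sum_empty]; positivity
  | succ N =>
    rw [Finset.sum_range_succ']
    have hfirst : ‖((0 + 1 : ℕ) : ℂ) ^ (-w) - ((0 : ℕ) : ℂ) ^ (-w)‖ = 1 := by
      simp [Complex.zero_cpow (neg_ne_zero.mpr hw0)]
    have hstep (i : ℕ) : ‖((i + 1 + 1 : ℕ) : ℂ) ^ (-w) - ((i + 1 : ℕ) : ℂ) ^ (-w)‖
        ≤ ‖w‖ / w.re * (r (i + 1) - r (i + 1 + 1)) := by
      have := norm_ofReal_cpow_neg_sub_le (x := (i + 1 : ℕ)) (y := (i + 1 + 1 : ℕ))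
        (by positivity) (by simp) hw
      simpa [r] using this
    have htele : ∑ i ∈ Finset.range N, (r (i + 1) - r (i + 1 + 1)) ≤ 1 := by
      rw [Finset.sum_range_sub' (fun i => r (i + 1))]
      simp only [r, Nat.cast_one, Real.one_rpow, zero_add]
      linarith [Real.rpow_nonneg (Nat.cast_nonneg (N + 1)) (-w.re)]
    rw [hfirst, add_comm]
    gcongr
    calc _ ≤ ∑ i ∈ Finset.range N, ‖w‖ / w.re * (r (i + 1) - r (i + 1 + 1)) :=
          Finset.sum_le_sum fun i _ => hstep i
      _ ≤ ‖w‖ / w.re := by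
          rw [← Finset.mul_sum]
          exact mul_le_of_le_one_right (by positivity) htele

lemma norm_sum_range_mul_natCast_cpow_le {Y : ℕ → ℂ} {B : ℝ}
    (hY : ∀ M, ‖∑ n ∈ Finset.range M, Y n‖ ≤ B) {w : ℂ} (hw : 0 < w.re) (M : ℕ) :
    ‖∑ n ∈ Finset.range M, Y n * (n : ℂ) ^ (-w)‖ ≤ (2 + ‖w‖ / w.re) * B := by
  have := norm_sum_range_smul_le hY (norm_natCast_cpow_neg_le_one hw.le)
    (fun N => by exact_mod_cast sum_range_norm_natCast_cpow_neg_sub_le hw N) M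
  simp only [smul_eq_mul, mul_comm _ (Y _)] at this
  linarith

lemma sum_range_sum_Ico_eq_sum_Ico {M : Type*} [AddCommMonoid M] (f : ℕ → M) (a b N : ℕ) :
    ∑ i ∈ Finset.range N, ∑ n ∈ Finset.Ico (a + i * b) (a + (i + 1) * b), f n
      = ∑ n ∈ Finset.Ico a (a + N * b), f n := by
  induction N with
  | zero => simp
  | succ N ih =>
    rw [Finset.sum_range_succ, ih, Finset.sum_Ico_consecutive f (Nat.le_add_right a (N * b))
      (by nlinarith)]

lemma sum_Ico_two_pow_norm_sq_le {γ : ℕ → ℂ} {K η : ℝ} (hη : 0 ≤ η)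
    (hγ : ∀ n : ℕ, 1 ≤ n → ‖γ n‖ ≤ K * (n : ℝ) ^ (-(1 / 2 + η))) (k : ℕ) :
    ∑ n ∈ Finset.Ico (2 ^ k) (2 ^ (k + 1)), ‖γ n‖ ^ 2 ≤ (K * ((2 : ℝ) ^ (-η)) ^ k) ^ 2 := by
  set N : ℝ := 2 ^ k with hNdef
  have hN : 0 < N := by positivity
  have hterm : ∀ n ∈ Finset.Ico (2 ^ k) (2 ^ (k + 1)),
      ‖γ n‖ ^ 2 ≤ (K * N ^ (-(1 / 2 + η))) ^ 2 := fun n hn => by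
    have hNn : N ≤ n := by rw [hNdef]; exact_mod_cast (Finset.mem_Ico.mp hn).1
    have hn1 : 1 ≤ n := Nat.one_le_two_pow.trans (Finset.mem_Ico.mp hn).1
    have hK : 0 ≤ K := nonneg_of_mul_nonneg_left ((norm_nonneg _).trans (hγ n hn1))
      (Real.rpow_pos_of_pos (hN.trans_le hNn) _)
    refine pow_le_pow_left₀ (norm_nonneg _) ((hγ n hn1).trans ?_) 2
    exact mul_le_mul_of_nonneg_left (Real.rpow_le_rpow_of_nonpos hN hNn (by linarith)) hK
  have hcard : ((Finset.Ico (2 ^ k) (2 ^ (k + 1))).card : ℝ) = N := by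
    rw [Nat.card_Ico, pow_succ, show 2 ^ k * 2 - 2 ^ k = 2 ^ k by omega]
    push_cast
    rfl
  have hsqrt : (N ^ (-(1 / 2) : ℝ)) ^ 2 = N⁻¹ := by
    rw [← Real.rpow_natCast, ← Real.rpow_mul hN.le]
    norm_num [Real.rpow_neg_one]
  calc ∑ n ∈ Finset.Ico (2 ^ k) (2 ^ (k + 1)), ‖γ n‖ ^ 2
      ≤ N * (K * N ^ (-(1 / 2 + η))) ^ 2 := by
        have := Finset.sum_le_card_nsmul _ _ _ hterm
        rwa [nsmul_eq_mul, hcard] at this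
    _ = (K * N ^ (-η)) ^ 2 := by
        rw [neg_add, Real.rpow_add hN, mul_pow, mul_pow, mul_pow, hsqrt]
        field_simp
    _ = (K * ((2 : ℝ) ^ (-η)) ^ k) ^ 2 := by
        rw [Real.rpow_pow_comm zero_le_two]

section DyadicChaining

variable {E : Type*} [SeminormedAddCommGroup E] (X : ℕ → E)

def dyadicBlockSum (k l i : ℕ) : E :=
  ∑ n ∈ Finset.Ico (2 ^ k + i * 2 ^ l) (2 ^ k + (i + 1) * 2 ^ l), X n

def dyadicLevelNorm (k l : ℕ) : ℝ :=
  √(∑ i ∈ Finset.range (2 ^ (k - l)), ‖dyadicBlockSum X k l i‖ ^ 2)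

def dyadicChainBound (k : ℕ) : ℝ :=
  ∑ l ∈ Finset.range (k + 1), dyadicLevelNorm X k l

lemma dyadicLevelNorm_nonneg (k l : ℕ) : 0 ≤ dyadicLevelNorm X k l := Real.sqrt_nonneg _

lemma dyadicChainBound_nonneg (k : ℕ) : 0 ≤ dyadicChainBound X k :=
  Finset.sum_nonneg fun _ _ => dyadicLevelNorm_nonneg X _ _

lemma norm_dyadicBlockSum_le {k l i : ℕ} (hi : i < 2 ^ (k - l)) :
    ‖dyadicBlockSum X k l i‖ ≤ dyadicLevelNorm X k l :=
  Real.le_sqrt_of_sq_le <| Finset.single_le_sum (f := fun i => ‖dyadicBlockSum X k l i‖ ^ 2)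
    (fun _ _ => sq_nonneg _) (Finset.mem_range.mpr hi)

/-- A segment of length `m < 2 ^ l` starting at a block boundary of level `l` is the union of
at most one block of each level `l' < l`. -/
lemma norm_sum_Ico_dyadic_le {k l : ℕ} (hl : l ≤ k) {j m : ℕ} (hj : j < 2 ^ (k - l))
    (hm : m < 2 ^ l) :
    ‖∑ n ∈ Finset.Ico (2 ^ k + j * 2 ^ l) (2 ^ k + j * 2 ^ l + m), X n‖
      ≤ ∑ l' ∈ Finset.range l, dyadicLevelNorm X k l' := by
  induction l generalizing j m with
  | zero =>
    obtain rfl : m = 0 := by simpa using hm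
    simp
  | succ l ih =>
    have hkl : 2 ^ (k - l) = 2 * 2 ^ (k - (l + 1)) := by
      rw [← pow_succ']
      congr 1
      omega
    have hstart : 2 ^ k + j * 2 ^ (l + 1) = 2 ^ k + 2 * j * 2 ^ l := by ring
    rw [hstart, Finset.sum_range_succ]
    rcases lt_or_ge m (2 ^ l) with hml | hml
    · exact (ih (by omega) (by omega) hml).trans
        (le_add_of_nonneg_right (dyadicLevelNorm_nonneg X k l))
    · obtain ⟨m', rfl⟩ := Nat.exists_eq_add_of_le hml
      have hsplit := Finset.sum_Ico_consecutive X (Nat.le_add_right (2 ^ k + 2 * j * 2 ^ l) (2 ^ l))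
        (Nat.le_add_right _ m')
      rw [← add_assoc, ← hsplit, add_comm]
      refine (norm_add_le _ _).trans (add_le_add ?_ ?_)
      · have := ih (j := 2 * j + 1) (m := m') (by omega) (by omega) (by rw [pow_succ] at hm; omega)
        rwa [show 2 ^ k + (2 * j + 1) * 2 ^ l = 2 ^ k + 2 * j * 2 ^ l + 2 ^ l by ring] at this
      · have := norm_dyadicBlockSum_le X (k := k) (l := l) (i := 2 * j) (by omega)
        rwa [dyadicBlockSum, show 2 ^ k + (2 * j + 1) * 2 ^ l = 2 ^ k + 2 * j * 2 ^ l + 2 ^ l by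
          ring] at this

lemma norm_sum_Ico_two_pow_le (k : ℕ) {m : ℕ} (hm : m ≤ 2 ^ k) :
    ‖∑ n ∈ Finset.Ico (2 ^ k) (2 ^ k + m), X n‖ ≤ dyadicChainBound X k := by
  rw [dyadicChainBound, Finset.sum_range_succ]
  rcases hm.lt_or_eq with hm | rfl
  · have := norm_sum_Ico_dyadic_le X le_rfl (j := 0) (by simp) hm
    simp only [zero_mul, add_zero] at this
    exact this.trans (le_add_of_nonneg_right (dyadicLevelNorm_nonneg X k k))
  · have := norm_dyadicBlockSum_le X (k := k) (l := k) (i := 0) (by simp)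
    simp only [dyadicBlockSum, zero_mul, add_zero, zero_add, one_mul] at this
    exact this.trans (le_add_of_nonneg_left (Finset.sum_nonneg fun _ _ =>
      dyadicLevelNorm_nonneg X k _))

lemma norm_sum_range_le_dyadicChainBound {κ M : ℕ} (hM : M ≤ 2 ^ κ) :
    ‖∑ n ∈ Finset.range M, X n‖ ≤ ‖X 0‖ + ∑ k ∈ Finset.range κ, dyadicChainBound X k := by
  induction κ generalizing M with
  | zero =>
    interval_cases M <;> simp
  | succ κ ih =>
    rw [Finset.sum_range_succ, ← add_assoc]
    rcases le_or_gt M (2 ^ κ) with hMκ | hMκ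
    · exact (ih hMκ).trans (le_add_of_nonneg_right (dyadicChainBound_nonneg X κ))
    · obtain ⟨m, rfl⟩ := Nat.exists_eq_add_of_le hMκ.le
      rw [← Finset.sum_range_add_sum_Ico X (Nat.le_add_right _ m)]
      exact (norm_add_le _ _).trans (add_le_add (ih le_rfl)
        (norm_sum_Ico_two_pow_le X κ (by rw [pow_succ] at hM; omega)))

lemma norm_sum_range_le_tsum_dyadicChainBound (h : Summable (dyadicChainBound X)) (M : ℕ) :
    ‖∑ n ∈ Finset.range M, X n‖ ≤ ‖X 0‖ + ∑' k, dyadicChainBound X k :=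
  (norm_sum_range_le_dyadicChainBound X (Nat.lt_two_pow_self (n := M)).le).trans <|
    add_le_add le_rfl (h.sum_le_tsum _ fun k _ => dyadicChainBound_nonneg X k)

end DyadicChaining

namespace SClassTilde

open ComplexConjugate

variable {μ : Measure ProdCircle}

lemma continuous_omegaMul (n : ℕ) : Continuous fun ω : ProdCircle => omegaMul ω n := by
  simp only [omegaMul, Finsupp.prod]
  refine continuous_finsetProd _ fun p _ => ?_
  split_ifs with hp
  · exact ((continuous_apply _).subtype_val).pow _
  · exact continuous_const

lemma norm_omegaMul (ω : ProdCircle) (n : ℕ) : ‖omegaMul ω n‖ = 1 := by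
  rw [omegaMul, Finsupp.prod, norm_prod]
  refine Finset.prod_eq_one fun p _ => ?_
  split_ifs <;> simp [Circle.norm_coe]

lemma omegaMul_mul (g ω : ProdCircle) (n : ℕ) :
    omegaMul (g * ω) n = omegaMul g n * omegaMul ω n := by
  simp only [omegaMul, Finsupp.prod, ← Finset.prod_mul_distrib]
  refine Finset.prod_congr rfl fun p _ => ?_
  split_ifs with hp
  · rw [show (g * ω) ⟨p, hp⟩ = g ⟨p, hp⟩ * ω ⟨p, hp⟩ from rfl, Circle.coe_mul, mul_pow]
  · simp

lemma omegaMul_ite (q : ℕ) (z : Circle) (n : ℕ) :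
    omegaMul (fun r : Nat.Primes => if (r : ℕ) = q then z else 1) n
      = (z : ℂ) ^ n.factorization q := by
  rw [omegaMul, Finsupp.prod, Finset.prod_eq_single q]
  · split_ifs with hq h
    · rfl
    · exact absurd rfl h
    · simp [Nat.factorization_eq_zero_of_not_prime _ hq]
  · intro p _ hpq
    split_ifs <;> simp
  · intro hq
    simp [Finsupp.notMem_support_iff.mp hq]

/-- If `n ≠ m`, some `p` occurs in them with exponents `e ≠ f`. Translating `ω` by the point
`z` at `p` multiplies `ω(n) conj ω(m)` by `z ^ e conj z ^ f`, which is `-1` for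
`z = exp (iπ / (e - f))`. -/
lemma integral_omegaMul_mul_conj_of_ne [μ.IsMulLeftInvariant] {n m : ℕ} (hn : n ≠ 0)
    (hm : m ≠ 0) (hnm : n ≠ m) : ∫ ω, omegaMul ω n * conj (omegaMul ω m) ∂μ = 0 := by
  obtain ⟨p, hp⟩ : ∃ p, n.factorization p ≠ m.factorization p := by
    by_contra! h
    exact hnm (Nat.factorization_inj hn hm (Finsupp.ext h))
  have hef : (n.factorization p : ℂ) - m.factorization p ≠ 0 :=
    sub_ne_zero.mpr (by exact_mod_cast hp)
  set z : Circle := Circle.exp (Real.pi / ((n.factorization p : ℝ) - m.factorization p))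
  have hz : (z : ℂ) ^ n.factorization p * conj ((z : ℂ) ^ m.factorization p) = -1 := by
    rw [map_pow, Circle.coe_exp, ← Complex.exp_conj, map_mul, Complex.conj_ofReal,
      Complex.conj_I, ← Complex.exp_nat_mul, ← Complex.exp_nat_mul, ← Complex.exp_add]
    convert Complex.exp_pi_mul_I using 2
    push_cast
    field_simp
    ring
  set g : ProdCircle := fun r => if (r : ℕ) = p then z else 1
  have hflip (ω : ProdCircle) : omegaMul (g * ω) n * conj (omegaMul (g * ω) m)
      = -(omegaMul ω n * conj (omegaMul ω m)) := by
    rw [omegaMul_mul, omegaMul_mul, omegaMul_ite, omegaMul_ite, map_mul]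
    linear_combination (omegaMul ω n * conj (omegaMul ω m)) * hz
  have htranslate := integral_mul_left_eq_self (μ := μ)
    (fun ω => omegaMul ω n * conj (omegaMul ω m)) g
  simp only [hflip, integral_neg] at htranslate
  linear_combination (-1 / 2 : ℂ) * htranslate

lemma integral_omegaMul_mul_conj_self (n : ℕ) :
    ∫ ω, omegaMul ω n * conj (omegaMul ω n) ∂μ = μ.real Set.univ := by
  simp [Complex.mul_conj, Complex.normSq_eq_norm_sq, norm_omegaMul]

lemma continuous_sum_mul_omegaMul (γ : ℕ → ℂ) (I : Finset ℕ) :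
    Continuous fun ω => ∑ n ∈ I, γ n * omegaMul ω n :=
  continuous_finsetSum _ fun n _ => continuous_const.mul (continuous_omegaMul n)

lemma continuous_dyadicLevelNorm (γ : ℕ → ℂ) (k l : ℕ) :
    Continuous fun ω => dyadicLevelNorm (fun n => γ n * omegaMul ω n) k l :=
  Real.continuous_sqrt.comp <| continuous_finsetSum _ fun _ _ =>
    (continuous_sum_mul_omegaMul γ _).norm.pow 2

lemma continuous_dyadicChainBound (γ : ℕ → ℂ) (k : ℕ) :
    Continuous fun ω => dyadicChainBound (fun n => γ n * omegaMul ω n) k :=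
  continuous_finsetSum _ fun l _ => continuous_dyadicLevelNorm γ k l

section

variable [IsFiniteMeasure μ] [μ.IsMulLeftInvariant]

lemma integral_norm_sum_mul_omegaMul_sq (γ : ℕ → ℂ) {I : Finset ℕ} (hI : 0 ∉ I) :
    ∫ ω, ‖∑ n ∈ I, γ n * omegaMul ω n‖ ^ 2 ∂μ = μ.real Set.univ * ∑ n ∈ I, ‖γ n‖ ^ 2 := by
  have hint (n m : ℕ) :
      Integrable (fun ω => γ n * conj (γ m) * (omegaMul ω n * conj (omegaMul ω m))) μ :=
    (continuous_const.mul ((continuous_omegaMul n).mul (continuous_omegaMul m).star)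
      ).integrable_of_hasCompactSupport (.of_compactSpace _)
  have hexpand (ω : ProdCircle) : (‖∑ n ∈ I, γ n * omegaMul ω n‖ ^ 2 : ℂ)
      = ∑ n ∈ I, ∑ m ∈ I, γ n * conj (γ m) * (omegaMul ω n * conj (omegaMul ω m)) := by
    rw [← Complex.mul_conj', map_sum, Finset.sum_mul_sum]
    refine Finset.sum_congr rfl fun n _ => Finset.sum_congr rfl fun m _ => ?_
    rw [map_mul]
    ring
  have hdiag : ∀ n ∈ I, ∑ m ∈ I, γ n * conj (γ m) * ∫ ω, omegaMul ω n * conj (omegaMul ω m) ∂μ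
      = ((μ.real Set.univ * ‖γ n‖ ^ 2 : ℝ) : ℂ) := fun n hn => by
    rw [Finset.sum_eq_single_of_mem n hn, integral_omegaMul_mul_conj_self, Complex.mul_conj']
    · push_cast
      ring
    · intro m hm hmn
      rw [integral_omegaMul_mul_conj_of_ne (ne_of_mem_of_not_mem hn hI)
        (ne_of_mem_of_not_mem hm hI) hmn.symm, mul_zero]
  apply Complex.ofReal_injective
  rw [← integral_complex_ofReal]
  push_cast
  rw [integral_congr_ae (Eventually.of_forall hexpand)]
  rw [integral_finsetSum _ fun n _ => integrable_finsetSum _ fun m _ => hint n m]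
  simp only [integral_finsetSum _ fun m _ => hint _ m, integral_const_mul]
  rw [Finset.sum_congr rfl hdiag]
  push_cast
  rw [Finset.mul_sum]

lemma integral_dyadicLevelNorm_sq (γ : ℕ → ℂ) {k l : ℕ} (hl : l ≤ k) :
    ∫ ω, dyadicLevelNorm (fun n => γ n * omegaMul ω n) k l ^ 2 ∂μ
      = μ.real Set.univ * ∑ n ∈ Finset.Ico (2 ^ k) (2 ^ (k + 1)), ‖γ n‖ ^ 2 := by
  have hblocks : 2 ^ k + 2 ^ (k - l) * 2 ^ l = 2 ^ (k + 1) := by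
    rw [← pow_add, Nat.sub_add_cancel hl, pow_succ]
    ring
  have hint (I : Finset ℕ) : Integrable (fun ω => ‖∑ n ∈ I, γ n * omegaMul ω n‖ ^ 2) μ :=
    ((continuous_sum_mul_omegaMul γ I).norm.pow 2).integrable_of_hasCompactSupport
      (.of_compactSpace _)
  simp only [dyadicLevelNorm, Real.sq_sqrt (Finset.sum_nonneg fun _ _ => sq_nonneg _),
    dyadicBlockSum]
  rw [integral_finsetSum _ fun i _ => hint _,
    Finset.sum_congr rfl fun i _ => integral_norm_sum_mul_omegaMul_sq γ (by simp),
    ← Finset.mul_sum, sum_range_sum_Ico_eq_sum_Ico, hblocks]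

lemma eLpNorm_dyadicLevelNorm_le {γ : ℕ → ℂ} {K η : ℝ} (hη : 0 ≤ η)
    (hγ : ∀ n : ℕ, 1 ≤ n → ‖γ n‖ ≤ K * (n : ℝ) ^ (-(1 / 2 + η))) {k l : ℕ} (hl : l ≤ k) :
    eLpNorm (fun ω => dyadicLevelNorm (fun n => γ n * omegaMul ω n) k l) 2 μ
      ≤ ENNReal.ofReal (√(μ.real Set.univ) * |K| * ((2 : ℝ) ^ (-η)) ^ k) := by
  have hmem : MemLp (fun ω => dyadicLevelNorm (fun n => γ n * omegaMul ω n) k l) 2 μ :=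
    (continuous_dyadicLevelNorm γ k l).memLp_of_hasCompactSupport (.of_compactSpace _)
  rw [hmem.eLpNorm_eq_integral_rpow_norm two_ne_zero ENNReal.ofNat_ne_top]
  refine ENNReal.ofReal_le_ofReal ?_
  simp only [ENNReal.toReal_ofNat, Real.norm_eq_abs, Real.rpow_two, sq_abs]
  rw [integral_dyadicLevelNorm_sq γ hl, ← one_div, ← Real.sqrt_eq_rpow, Real.sqrt_mul
    measureReal_nonneg, mul_assoc, ← abs_of_nonneg (by positivity : 0 ≤ ((2 : ℝ) ^ (-η)) ^ k),
    ← abs_mul, ← Real.sqrt_sq_eq_abs]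
  gcongr
  exact sum_Ico_two_pow_norm_sq_le hη hγ k

lemma tsum_eLpNorm_dyadicChainBound_ne_top {γ : ℕ → ℂ} {K η : ℝ} (hη : 0 < η)
    (hγ : ∀ n : ℕ, 1 ≤ n → ‖γ n‖ ≤ K * (n : ℝ) ^ (-(1 / 2 + η))) :
    ∑' k, eLpNorm (fun ω => dyadicChainBound (fun n => γ n * omegaMul ω n) k) 2 μ ≠ ⊤ := by
  set r : ℝ := (2 : ℝ) ^ (-η)
  set c : ℝ := √(μ.real Set.univ) * |K|
  have hr : r < 1 := Real.rpow_lt_one_of_one_lt_of_neg one_lt_two (by linarith)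
  have hk (k : ℕ) : eLpNorm (fun ω => dyadicChainBound (fun n => γ n * omegaMul ω n) k) 2 μ
      ≤ ENNReal.ofReal ((k + 1) * (c * r ^ k)) := by
    have hfun : (fun ω => dyadicChainBound (fun n => γ n * omegaMul ω n) k)
        = ∑ l ∈ Finset.range (k + 1),
            fun ω => dyadicLevelNorm (fun n => γ n * omegaMul ω n) k l := by
      ext ω
      simp [dyadicChainBound]
    calc _ ≤ ∑ l ∈ Finset.range (k + 1),
          eLpNorm (fun ω => dyadicLevelNorm (fun n => γ n * omegaMul ω n) k l) 2 μ := by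
          rw [hfun]
          exact eLpNorm_sum_le (fun l _ => (continuous_dyadicLevelNorm γ k l).aestronglyMeasurable)
            one_le_two
      _ ≤ ∑ l ∈ Finset.range (k + 1), ENNReal.ofReal (c * r ^ k) :=
          Finset.sum_le_sum fun l hl =>
            eLpNorm_dyadicLevelNorm_le hη.le hγ (Nat.lt_succ_iff.mp (Finset.mem_range.mp hl))
      _ = ENNReal.ofReal ((k + 1) * (c * r ^ k)) := by
          rw [Finset.sum_const, Finset.card_range, nsmul_eq_mul, ← ENNReal.ofReal_natCast,
            ← ENNReal.ofReal_mul (Nat.cast_nonneg _)]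
          push_cast
          rfl
  have hsum : Summable fun k : ℕ => ((k : ℝ) + 1) * (c * r ^ k) := by
    have hr' : ‖r‖ < 1 := by rwa [Real.norm_of_nonneg (by positivity)]
    refine (((summable_pow_mul_geometric_of_norm_lt_one 1 hr').add
      (summable_geometric_of_norm_lt_one hr')).mul_left c).congr fun k => ?_
    simp only [pow_one]
    ring
  refine ne_top_of_le_ne_top ?_ (ENNReal.tsum_le_tsum hk)
  rw [← ENNReal.ofReal_tsum_of_nonneg (fun k => by positivity) hsum]
  exact ENNReal.ofReal_ne_top

lemma ae_exists_forall_norm_sum_range_mul_omegaMul_le {γ : ℕ → ℂ} {K η : ℝ} (hη : 0 < η)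
    (hγ : ∀ n : ℕ, 1 ≤ n → ‖γ n‖ ≤ K * (n : ℝ) ^ (-(1 / 2 + η))) :
    ∀ᵐ ω ∂μ, ∃ B, ∀ M, ‖∑ n ∈ Finset.range M, γ n * omegaMul ω n‖ ≤ B := by
  filter_upwards [summable_norm_of_tsum_eLpNorm_ne_top one_le_two
    (fun k => (continuous_dyadicChainBound γ k).aestronglyMeasurable)
    (tsum_eLpNorm_dyadicChainBound_ne_top hη hγ)] with ω hω
  simp only [Real.norm_of_nonneg (dyadicChainBound_nonneg _ _)] at hω
  exact ⟨_, norm_sum_range_le_tsum_dyadicChainBound _ hω⟩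

end

lemma one_half_le_σφ (φ : SClassTilde) : 1 / 2 ≤ φ.σφ := by
  refine le_csInf ⟨1, .inr rfl⟩ ?_
  rintro x (hx | rfl)
  · exact hx.1
  · norm_num

lemma exists_norm_coeff_mul_cpow_le (φ : SClassTilde) {ε : ℝ} (hε : 0 < ε) (σ : ℝ) :
    ∃ K, ∀ n : ℕ, 1 ≤ n → ‖φ.a n * (n : ℂ) ^ (-(σ : ℂ))‖ ≤ K * (n : ℝ) ^ (ε - σ) := by
  obtain ⟨K, -, hK⟩ := φ.hS1 ε hε
  refine ⟨K, fun n hn => ?_⟩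
  have hn' : (0 : ℝ) < n := by exact_mod_cast hn
  rw [norm_mul, Complex.norm_natCast_cpow_of_pos hn, Complex.neg_re, Complex.ofReal_re,
    Real.rpow_sub hn', div_eq_mul_inv, ← Real.rpow_neg hn'.le, ← mul_assoc]
  exact mul_le_mul_of_nonneg_right (hK n hn) (by positivity)

lemma norm_randSeries_le (φ : SClassTilde) (ω : ProdCircle) {σ₀ δ B : ℝ} (hσ₀ : 0 ≤ σ₀)
    (hδ : 0 < δ)
    (hB : ∀ M, ‖∑ n ∈ Finset.range M, φ.a n * (n : ℂ) ^ (-(σ₀ : ℂ)) * omegaMul ω n‖ ≤ B)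
    {s : ℂ} (hs : σ₀ + δ ≤ s.re) : ‖φ.randSeries ω s‖ ≤ (3 + |s.im| / δ) * B := by
  set w := s - σ₀
  have hw : δ ≤ w.re := by simp [w]; linarith
  have hterm (n : ℕ) : φ.a n * omegaMul ω n / (n : ℂ) ^ s
      = φ.a n * (n : ℂ) ^ (-(σ₀ : ℂ)) * omegaMul ω n * (n : ℂ) ^ (-w) := by
    rcases Nat.eq_zero_or_pos n with rfl | hn
    · have hs0 : s ≠ 0 := fun h => by simp [h] at hs; linarith
      have hw0 : -w ≠ 0 := neg_ne_zero.mpr fun h => by simp [h] at hw; linarith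
      simp [Complex.zero_cpow hs0, Complex.zero_cpow hw0]
    · rw [div_eq_mul_inv, ← Complex.cpow_neg, show -s = -(σ₀ : ℂ) + -w by simp only [w]; ring,
        Complex.cpow_add _ _ (Nat.cast_ne_zero.mpr hn.ne')]
      ring
  have hB0 : 0 ≤ B := by simpa using hB 0
  have hratio : ‖w‖ / w.re ≤ 1 + |s.im| / δ := by
    have hwre : 0 < w.re := hδ.trans_le hw
    have him : w.im = s.im := by simp [w]
    rw [div_le_iff₀ hwre]
    calc ‖w‖ ≤ |w.re| + |w.im| := Complex.norm_le_abs_re_add_abs_im w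
      _ = w.re + |s.im| := by rw [abs_of_pos hwre, him]
      _ ≤ w.re + |s.im| * (w.re / δ) :=
          add_le_add le_rfl (le_mul_of_one_le_right (abs_nonneg _) ((one_le_div hδ).mpr hw))
      _ = (1 + |s.im| / δ) * w.re := by ring
  refine norm_tsum_le_of_forall_norm_sum_range_le fun M => ?_
  simp only [hterm]
  refine (norm_sum_range_mul_natCast_cpow_le hB (hδ.trans_le hw) M).trans ?_
  nlinarith

end SClassTilde

/-- **Polynomial growth of the random model.** For `σ₁ > σ_φ` and almost every `ω ∈ Ω`
there is `C(σ₁, ω) > 0` with `|φ(s, ω)| ≤ C(σ₁, ω)(|t| + 2)` for all `s = σ + it` with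
`σ ≥ σ₁`. -/
theorem stmt10 (φ : SClassTilde) (σ₁ : ℝ) (h : φ.σφ < σ₁) :
    ∀ᵐ ω ∂haarOmega, ∃ C : ℝ, 0 < C ∧
      ∀ s : ℂ, σ₁ ≤ s.re → ‖φ.randSeries ω s‖ ≤ C * (|s.im| + 2) := by
  set η := (φ.σφ + σ₁ - 1) / 4 with hη_def
  have hη : 0 < η := by linarith [φ.one_half_le_σφ]
  set δ := σ₁ - (1 / 2 + 2 * η) with hδ_def
  have hδ : 0 < δ := by linarith
  obtain ⟨K, hK⟩ := φ.exists_norm_coeff_mul_cpow_le hη (1 / 2 + 2 * η)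
  simp only [show η - (1 / 2 + 2 * η) = -(1 / 2 + η) by ring] at hK
  filter_upwards [SClassTilde.ae_exists_forall_norm_sum_range_mul_omegaMul_le
    (μ := haarOmega) hη hK] with ω ⟨B, hB⟩
  have hB0 : 0 ≤ B := by simpa using hB 0
  refine ⟨(3 + 1 / δ) * (B + 1), by positivity, fun s hs => ?_⟩
  calc ‖φ.randSeries ω s‖ ≤ (3 + |s.im| / δ) * B :=
        φ.norm_randSeries_le ω (by positivity) hδ hB (by linarith)
    _ ≤ (3 + 1 / δ) * (|s.im| + 2) * (B + 1) := by
        gcongr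
        · rw [div_eq_mul_one_div]
          nlinarith [abs_nonneg s.im, one_div_pos.mpr hδ]
        · linarith
    _ = (3 + 1 / δ) * (B + 1) * (|s.im| + 2) := by ring

end
end

section
/- Let φ ∈ S̃, with Euler product local roots satisfying |α_{j,φ}(p)| ≤ 1, and for a prime p and z ∈ 𝕋 set log φ_p(s, z) = −Σ_{j=1}^{m_φ} Log(1 − α_{j,φ}(p)z·p^{−s}), where Log is the principal branch of the logarithm. Then for each fixed s with Re(s) > 1/2: (a) E^m[log φ_p(s, ω(p))] = 0 for every prime p; (b) Σ_p E^m[|log φ_p(s, ω(p))|²] < ∞; and consequently (c) the series log φ(s, ω) = Σ_p log φ_p(s, ω(p)) converges for almost every ω ∈ Ω. -/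
open Complex MeasureTheory Filter Topology

noncomputable section

/-!
Expanding the principal logarithm,
`log φ_p(s, z) = ∑_j ∑_{k ≥ 1} (α_{j,φ}(p) p^{-s})^k z^k / k` is a power series in `z` without
constant term, and `∫ z^k dz = 0` over `𝕋` for `k ≥ 1` (rotating by a `k`-th root of `-1` changes
its sign), which gives (a). The factor is `O(m_φ p^{-σ})` uniformly in `z ∈ 𝕋`, so (b) holds for
`σ > 1/2`. The coordinates `ω(p)` are independent under Haar measure, hence the partial sums
over the primes form a martingale whose second moments are bounded by the sum in (b); by the
martingale convergence theorem they converge almost surely, which is (c). The Haar measure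
`haarOmega` is only a positive multiple of the probability Haar measure, and all three
statements are insensitive to that factor.
-/

open MeasureTheory ProbabilityTheory Finset
open scoped ENNReal NNReal

section Kolmogorov

variable {Ω : Type*} [MeasurableSpace Ω] {μ : Measure Ω} [IsProbabilityMeasure μ]

theorem martingale_partialSum_of_iIndepFun {Y : ℕ → Ω → ℝ} (hY : ∀ i, StronglyMeasurable (Y i))
    (hind : iIndepFun Y μ) (hint : ∀ i, Integrable (Y i) μ) (hmean : ∀ i, μ[Y i] = 0) :
    Martingale (fun n => ∑ i ∈ range (n + 1), Y i) (Filtration.natural Y hY) μ := by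
  set F := Filtration.natural Y hY
  have hadapted : StronglyAdapted F fun n => ∑ i ∈ range (n + 1), Y i := fun n =>
    Finset.stronglyMeasurable_sum _ fun i hi => (Filtration.stronglyAdapted_natural hY i).mono
      (F.mono (Nat.lt_succ_iff.mp (mem_range.mp hi)))
  have hint_sum : ∀ n, Integrable (∑ i ∈ range (n + 1), Y i) μ := fun n =>
    integrable_finsetSum' _ fun i _ => hint i
  refine martingale_nat hadapted hint_sum fun n => ?_
  have hindep_next : μ[Y (n + 1) | F n] =ᵐ[μ] 0 := by
    have := hind.condExp_natural_ae_eq_of_lt hY (Nat.lt_succ_self n)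
    rwa [hmean] at this
  calc ∑ i ∈ range (n + 1), Y i
      = μ[∑ i ∈ range (n + 1), Y i | F n] + 0 := by
        rw [add_zero, condExp_of_stronglyMeasurable (F.le n) (hadapted n) (hint_sum n)]
    _ =ᵐ[μ] μ[∑ i ∈ range (n + 1), Y i | F n] + μ[Y (n + 1) | F n] :=
        (Filter.EventuallyEq.refl _ _).add hindep_next.symm
    _ =ᵐ[μ] μ[∑ i ∈ range (n + 1), Y i + Y (n + 1) | F n] :=
        (condExp_add (hint_sum n) (hint (n + 1)) _).symm
    _ = μ[∑ i ∈ range (n + 1 + 1), Y i | F n] := by rw [sum_range_succ _ (n + 1)]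

theorem eLpNorm_one_le_of_integral_sq_le {f : Ω → ℝ} (hf : MemLp f 2 μ) {C : ℝ}
    (hC : ∫ ω, f ω ^ 2 ∂μ ≤ C) : eLpNorm f 1 μ ≤ ENNReal.ofReal ((1 + C) / 2) := by
  have hint : Integrable f μ := hf.integrable one_le_two
  rw [eLpNorm_one_eq_lintegral_enorm, ← ofReal_integral_norm_eq_lintegral_enorm hint]
  refine ENNReal.ofReal_le_ofReal ?_
  calc ∫ ω, ‖f ω‖ ∂μ ≤ ∫ ω, (1 + f ω ^ 2) / 2 ∂μ := by
        refine integral_mono hint.norm (((integrable_const 1).add hf.integrable_sq).div_const 2)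
          fun ω => ?_
        nlinarith [sq_nonneg (|f ω| - 1), sq_abs (f ω), Real.norm_eq_abs (f ω)]
    _ = (1 + ∫ ω, f ω ^ 2 ∂μ) / 2 := by
        rw [integral_div, integral_add (integrable_const 1) hf.integrable_sq]
        simp
    _ ≤ (1 + C) / 2 := by linarith

theorem ae_exists_tendsto_partialSum_of_iIndepFun {Y : ℕ → Ω → ℝ}
    (hY : ∀ i, StronglyMeasurable (Y i)) (hind : iIndepFun Y μ) (hL2 : ∀ i, MemLp (Y i) 2 μ)
    (hmean : ∀ i, μ[Y i] = 0) (hvar : Summable fun i => Var[Y i; μ]) :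
    ∀ᵐ ω ∂μ, ∃ c, Filter.Tendsto (fun n => ∑ i ∈ range n, Y i ω) Filter.atTop (nhds c) := by
  have hmart := martingale_partialSum_of_iIndepFun hY hind (fun i => (hL2 i).integrable one_le_two)
    hmean
  have hsq : ∀ n, ∫ ω, (∑ i ∈ range (n + 1), Y i) ω ^ 2 ∂μ ≤ ∑' i, Var[Y i; μ] := fun n => by
    have hmean_sum : μ[∑ i ∈ range (n + 1), Y i] = 0 := by
      simp only [Finset.sum_apply]
      rw [integral_finsetSum _ fun i _ => (hL2 i).integrable one_le_two]
      exact sum_eq_zero fun i _ => hmean i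
    rw [← variance_of_integral_eq_zero (memLp_finsetSum' _ fun i _ => hL2 i).aemeasurable hmean_sum,
      IndepFun.variance_sum (fun i _ => hL2 i) fun i _ j _ hij => hind.indepFun hij]
    exact hvar.sum_le_tsum _ fun i _ => variance_nonneg _ _
  filter_upwards [hmart.submartingale.exists_ae_tendsto_of_bdd fun n =>
    eLpNorm_one_le_of_integral_sq_le (memLp_finsetSum' _ fun i _ => hL2 i) (hsq n)]
    with ω ⟨c, hc⟩
  refine ⟨c, (Filter.tendsto_add_atTop_iff_nat 1).1 ?_⟩
  simpa only [Finset.sum_apply] using hc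

theorem ae_exists_tendsto_partialSum_of_iIndepFun_complex {X : ℕ → Ω → ℂ}
    (hX : ∀ i, StronglyMeasurable (X i)) (hind : iIndepFun X μ) (hL2 : ∀ i, MemLp (X i) 2 μ)
    (hmean : ∀ i, μ[X i] = 0) (hsum : Summable fun i => ∫ ω, ‖X i ω‖ ^ 2 ∂μ) :
    ∀ᵐ ω ∂μ, ∃ c, Filter.Tendsto (fun n => ∑ i ∈ range n, X i ω) Filter.atTop (nhds c) := by
  have hcomponent : ∀ L : ℂ →L[ℝ] ℝ, (∀ z, |L z| ≤ ‖z‖) → ∀ᵐ ω ∂μ, ∃ c,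
      Filter.Tendsto (fun n => ∑ i ∈ range n, L (X i ω)) Filter.atTop (nhds c) := by
    intro L hL
    have hL2' : ∀ i, MemLp (fun ω => L (X i ω)) 2 μ := fun i => L.comp_memLp' (hL2 i)
    have hmean' : ∀ i, ∫ ω, L (X i ω) ∂μ = 0 := fun i => by
      rw [L.integral_comp_comm ((hL2 i).integrable one_le_two), hmean i, map_zero]
    refine ae_exists_tendsto_partialSum_of_iIndepFun
      (fun i => L.continuous.comp_stronglyMeasurable (hX i))
      (hind.comp _ fun _ => L.continuous.measurable) hL2' hmean' ?_
    refine hsum.of_nonneg_of_le (fun i => variance_nonneg _ _) fun i => ?_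
    rw [variance_of_integral_eq_zero (hL2' i).aemeasurable (hmean' i)]
    refine integral_mono (hL2' i).integrable_sq
      ((memLp_two_iff_integrable_sq_norm (hL2 i).1).1 (hL2 i)) fun ω => ?_
    simpa only [sq_abs] using pow_le_pow_left₀ (abs_nonneg _) (hL (X i ω)) 2
  filter_upwards [hcomponent Complex.reCLM fun z => Complex.abs_re_le_norm z,
    hcomponent Complex.imCLM fun z => Complex.abs_im_le_norm z] with ω ⟨a, ha⟩ ⟨b, hb⟩
  refine ⟨a + b * Complex.I, ?_⟩
  refine (((Complex.continuous_ofReal.tendsto a).comp ha).add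
    (((Complex.continuous_ofReal.tendsto b).comp hb).mul_const Complex.I)).congr fun n => ?_
  simp only [Function.comp_apply, Complex.reCLM_apply, Complex.imCLM_apply, ← Complex.re_sum,
    ← Complex.im_sum, Complex.re_add_im]

end Kolmogorov

section HaarProbability

open Measure

variable (G : Type*) [Group G] [TopologicalSpace G] [IsTopologicalGroup G] [CompactSpace G]
  [MeasurableSpace G] [BorelSpace G]

def haarProbability : Measure G := haarMeasure ⊤

instance : (haarProbability G).IsHaarMeasure := isHaarMeasure_haarMeasure _

instance : IsProbabilityMeasure (haarProbability G) :=
  ⟨haarMeasure_self (K₀ := ⊤)⟩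

variable {G}

theorem eq_measure_univ_smul_haarProbability (μ : Measure G) [μ.IsHaarMeasure] :
    μ = μ Set.univ • haarProbability G := by
  have h := isMulInvariant_eq_smul_of_compactSpace μ (haarProbability G)
  have hc : (haarScalarFactor μ (haarProbability G) : ℝ≥0∞) = μ Set.univ := by
    simpa using (congr_arg (· Set.univ) h).symm
  ext s _
  conv_lhs => rw [h]
  rw [Measure.smul_apply, Measure.smul_apply, ← hc]
  rfl

variable {ι : Type*} [SecondCountableTopology G] [Countable ι]

theorem measurePreserving_eval_haarProbability (i : ι) :
    MeasurePreserving (fun ω : ι → G => ω i) (haarProbability (ι → G)) (haarProbability G) :=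
  (Pi.evalMonoidHom (fun _ => G) i).measurePreserving (continuous_apply i)
    (fun g => ⟨fun _ => g, rfl⟩) (by simp)

theorem iIndepFun_eval_haarProbability :
    iIndepFun (fun i (ω : ι → G) => ω i) (haarProbability (ι → G)) := by
  classical
  rw [iIndepFun_iff_measure_inter_preimage_eq_mul]
  intro S A hA
  let restrict : (ι → G) →* (S → G) := MonoidHom.pi fun i => Pi.evalMonoidHom (fun _ => G) i.1
  have hrestrict : MeasurePreserving restrict (haarProbability (ι → G))
      (Measure.pi fun _ => haarProbability G) :=
    restrict.measurePreserving (continuous_pi fun i => continuous_apply i.1)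
      (fun g => ⟨fun i => if h : i ∈ S then g ⟨i, h⟩ else 1, by ext i; simp [restrict]⟩)
      (by simp)
  have hpre : ⋂ i ∈ S, (fun ω : ι → G => ω i) ⁻¹' A i
      = restrict ⁻¹' Set.univ.pi fun i : S => A i := by
    ext ω; simp [restrict]
  rw [hpre, hrestrict.measure_preimage
      (MeasurableSet.univ_pi fun i : S => hA i.1 i.2).nullMeasurableSet, Measure.pi_pi,
    ← Finset.prod_coe_sort S fun i => haarProbability (ι → G) ((fun ω : ι → G => ω i) ⁻¹' A i)]
  exact Finset.prod_congr rfl fun i _ =>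
    ((measurePreserving_eval_haarProbability (i : ι)).measure_preimage
      (hA i i.2).nullMeasurableSet).symm

end HaarProbability

theorem integral_coe_pow_haarProbability_circle {k : ℕ} (hk : k ≠ 0) :
    ∫ z : Circle, (z : ℂ) ^ k ∂haarProbability Circle = 0 := by
  set c : Circle := Circle.exp (Real.pi / k)
  have hc : (c : ℂ) ^ k = -1 := by
    rw [Circle.coe_exp, ← Complex.exp_nat_mul, ← Complex.exp_pi_mul_I]
    congr 1
    push_cast
    field_simp
  have hrot :=
    integral_mul_left_eq_self (μ := haarProbability Circle) (fun z : Circle => (z : ℂ) ^ k) c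
  simp only [Circle.coe_mul, mul_pow, hc, integral_const_mul] at hrot
  linear_combination -hrot / 2

theorem integral_log_one_sub_mul_haarProbability_circle {a : ℂ} (ha : ‖a‖ < 1) :
    ∫ z : Circle, Complex.log (1 - a * z) ∂haarProbability Circle = 0 := by
  set F : ℕ → Circle → ℂ := fun n z => (a * z) ^ n / n
  have hnorm : ∀ z : Circle, ‖a * z‖ = ‖a‖ := fun z => by simp [Circle.norm_coe]
  have hF_int : ∀ n, Integrable (F n) (haarProbability Circle) := fun n =>
    Continuous.integrable_of_hasCompactSupport (by fun_prop) (HasCompactSupport.of_compactSpace _)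
  have hF_sum : Summable fun n => ∫ z, ‖F n z‖ ∂haarProbability Circle := by
    refine (summable_geometric_of_lt_one (norm_nonneg a) ha).of_nonneg_of_le
      (fun n => integral_nonneg fun _ => norm_nonneg _) fun n => ?_
    simp only [F, norm_div, norm_pow, hnorm, Complex.norm_natCast, integral_const, smul_eq_mul,
      probReal_univ, one_mul]
    rcases eq_or_ne n 0 with rfl | hn
    · simp
    · exact div_le_self (pow_nonneg (norm_nonneg a) n)
        (by exact_mod_cast Nat.one_le_iff_ne_zero.mpr hn)
  have hF_zero : ∀ n, ∫ z, F n z ∂haarProbability Circle = 0 := fun n => by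
    rcases eq_or_ne n 0 with rfl | hn
    · simp [F]
    · simp only [F, mul_pow, div_eq_mul_inv, mul_right_comm _ _ ((n : ℂ)⁻¹), integral_const_mul,
        integral_coe_pow_haarProbability_circle hn, mul_zero]
  calc ∫ z : Circle, Complex.log (1 - a * z) ∂haarProbability Circle
      = -∫ z, ∑' n, F n z ∂haarProbability Circle := by
        rw [← integral_neg]
        refine integral_congr_ae (Filter.Eventually.of_forall fun z => ?_)
        simp only [F, (hasSum_taylorSeries_neg_log (lt_of_eq_of_lt (hnorm z) ha)).tsum_eq, neg_neg]
    _ = 0 := by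
        rw [← integral_tsum_of_summable_integral_norm hF_int hF_sum]
        simp [hF_zero]

theorem Complex.norm_log_one_sub_le {w : ℂ} (hw : ‖w‖ < 1) :
    ‖Complex.log (1 - w)‖ ≤ ‖w‖ / (1 - ‖w‖) := by
  have hlog := Complex.norm_log_one_add_le (z := -w) (by rwa [norm_neg])
  rw [← sub_eq_add_neg, norm_neg] at hlog
  have hpos : 0 < 1 - ‖w‖ := sub_pos.mpr hw
  refine hlog.trans (le_of_sub_nonneg ?_)
  have hkey : ‖w‖ / (1 - ‖w‖) - (‖w‖ ^ 2 * (1 - ‖w‖)⁻¹ / 2 + ‖w‖) = ‖w‖ ^ 2 / 2 / (1 - ‖w‖) := by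
    field_simp
    ring
  rw [hkey]
  positivity

theorem continuous_log_one_sub_mul_circle {c : ℂ} (hc : ‖c‖ < 1) :
    Continuous fun z : Circle => Complex.log (1 - c * z) := by
  refine Continuous.clog (by fun_prop) fun z => ?_
  rw [sub_eq_add_neg]
  refine Complex.mem_slitPlane_of_norm_lt_one ?_
  rwa [norm_neg, norm_mul, Circle.norm_coe, mul_one]

theorem Nat.Primes.rpow_neg_le_two_rpow_neg (p : Nat.Primes) {σ : ℝ} (hσ : 0 ≤ σ) :
    ((p : ℕ) : ℝ) ^ (-σ) ≤ 2 ^ (-σ) :=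
  Real.rpow_le_rpow_of_nonpos two_pos (by exact_mod_cast p.2.two_le) (neg_nonpos.mpr hσ)

theorem nthPrime_injective : Function.Injective nthPrime := fun _ _ h =>
  Nat.nth_injective Nat.infinite_setOfPred_prime (congrArg Subtype.val h)

namespace SClassTilde

variable (φ : SClassTilde) {s : ℂ}

theorem logFactor_eq_neg_sum (p : Nat.Primes) (z : ℂ) :
    logFactor φ p z s = -∑ j, Complex.log (1 - φ.α j p * ((p : ℕ) : ℂ) ^ (-s) * z) := by
  simp only [logFactor, mul_right_comm]

variable {φ}

theorem norm_α_mul_cpow_le (hα : ∀ j p, ‖φ.α j p‖ ≤ 1) (j : Fin φ.m) (p : Nat.Primes) :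
    ‖φ.α j p * ((p : ℕ) : ℂ) ^ (-s)‖ ≤ ((p : ℕ) : ℝ) ^ (-s.re) := by
  rw [norm_mul, Complex.norm_natCast_cpow_of_pos p.2.pos, Complex.neg_re]
  exact mul_le_of_le_one_left (by positivity) (hα j p)

theorem norm_α_mul_cpow_lt_one (hα : ∀ j p, ‖φ.α j p‖ ≤ 1) (hs : 0 < s.re) (j : Fin φ.m)
    (p : Nat.Primes) : ‖φ.α j p * ((p : ℕ) : ℂ) ^ (-s)‖ < 1 :=
  (norm_α_mul_cpow_le hα j p).trans_lt
    (Real.rpow_lt_one_of_one_lt_of_neg (by exact_mod_cast p.2.one_lt) (neg_neg_of_pos hs))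

theorem continuous_logFactor (hα : ∀ j p, ‖φ.α j p‖ ≤ 1) (hs : 0 < s.re) (p : Nat.Primes) :
    Continuous fun z : Circle => logFactor φ p z s := by
  simp only [logFactor_eq_neg_sum]
  exact (continuous_finsetSum _ fun j _ =>
    continuous_log_one_sub_mul_circle (norm_α_mul_cpow_lt_one hα hs j p)).neg

theorem norm_logFactor_le (hα : ∀ j p, ‖φ.α j p‖ ≤ 1) (hs : 0 < s.re) (p : Nat.Primes) {z : ℂ}
    (hz : ‖z‖ ≤ 1) :
    ‖logFactor φ p z s‖ ≤ φ.m * (((p : ℕ) : ℝ) ^ (-s.re) / (1 - 2 ^ (-s.re))) := by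
  have htwo : (2 : ℝ) ^ (-s.re) < 1 :=
    Real.rpow_lt_one_of_one_lt_of_neg one_lt_two (neg_neg_of_pos hs)
  rw [logFactor_eq_neg_sum, norm_neg]
  refine (norm_sum_le _ _).trans <| (Finset.sum_le_card_nsmul _ _
    (((p : ℕ) : ℝ) ^ (-s.re) / (1 - 2 ^ (-s.re))) fun j _ => ?_).trans_eq (by simp)
  have hw : ‖φ.α j p * ((p : ℕ) : ℂ) ^ (-s) * z‖ ≤ ((p : ℕ) : ℝ) ^ (-s.re) := by
    rw [norm_mul]
    exact mul_le_of_le_one_right (norm_nonneg _) hz |>.trans (norm_α_mul_cpow_le hα j p)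
  have hw_two := hw.trans (p.rpow_neg_le_two_rpow_neg hs.le)
  refine (Complex.norm_log_one_sub_le (hw_two.trans_lt htwo)).trans ?_
  exact div_le_div₀ (by positivity) hw (sub_pos.mpr htwo) (by linarith)

theorem integral_logFactor_haarProbability (hα : ∀ j p, ‖φ.α j p‖ ≤ 1) (hs : 0 < s.re)
    (p : Nat.Primes) : ∫ z : Circle, logFactor φ p z s ∂haarProbability Circle = 0 := by
  simp only [logFactor_eq_neg_sum]
  rw [integral_neg, integral_finsetSum _ fun j _ =>
    (continuous_log_one_sub_mul_circle (norm_α_mul_cpow_lt_one hα hs j p))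
      |>.integrable_of_hasCompactSupport (HasCompactSupport.of_compactSpace _)]
  simp [integral_log_one_sub_mul_haarProbability_circle (norm_α_mul_cpow_lt_one hα hs _ p)]

theorem integral_logFactor_eval (hα : ∀ j p, ‖φ.α j p‖ ≤ 1) (hs : 0 < s.re) (p : Nat.Primes) :
    ∫ ω : ProdCircle, logFactor φ p (ω p) s ∂haarProbability ProdCircle = 0 := by
  have hp := measurePreserving_eval_haarProbability (G := Circle) p
  have hmeas : AEStronglyMeasurable (fun z : Circle => logFactor φ p z s)
      ((haarProbability ProdCircle).map fun ω => ω p) := by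
    rw [hp.map_eq]
    exact (continuous_logFactor hα hs p).aestronglyMeasurable
  have hmap := integral_map hp.measurable.aemeasurable hmeas
  rw [hp.map_eq, integral_logFactor_haarProbability hα hs p] at hmap
  exact hmap.symm

theorem summable_integral_norm_logFactor_sq (hα : ∀ j p, ‖φ.α j p‖ ≤ 1) (hs : 1 / 2 < s.re) :
    Summable fun p : Nat.Primes =>
      ∫ ω : ProdCircle, ‖logFactor φ p (ω p) s‖ ^ 2 ∂haarProbability ProdCircle := by
  set C := ((φ.m : ℝ) / (1 - 2 ^ (-s.re))) ^ 2
  have hsummable : Summable fun p : Nat.Primes => C * (((p : ℕ) : ℝ) ^ (-s.re)) ^ 2 := by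
    refine (Nat.Primes.summable_rpow.mpr (by linarith : -(2 * s.re) < -1)).mul_left C |>.congr
      fun p => ?_
    rw [← Real.rpow_natCast, ← Real.rpow_mul (Nat.cast_nonneg _)]
    ring_nf
  refine hsummable.of_nonneg_of_le (fun p => integral_nonneg fun _ => by positivity) fun p => ?_
  have hbound : ∀ ω : ProdCircle,
      ‖logFactor φ p (ω p) s‖ ^ 2 ≤ C * (((p : ℕ) : ℝ) ^ (-s.re)) ^ 2 := fun ω => by
    refine (pow_le_pow_left₀ (norm_nonneg _)
      (norm_logFactor_le hα (by linarith) p (Circle.norm_coe _).le) 2).trans_eq ?_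
    ring
  calc ∫ ω : ProdCircle, ‖logFactor φ p (ω p) s‖ ^ 2 ∂haarProbability ProdCircle
      ≤ ∫ _ : ProdCircle, C * (((p : ℕ) : ℝ) ^ (-s.re)) ^ 2 ∂haarProbability ProdCircle :=
        integral_mono_of_nonneg (ae_of_all _ fun _ => by positivity) (integrable_const _)
          (ae_of_all _ hbound)
    _ = C * (((p : ℕ) : ℝ) ^ (-s.re)) ^ 2 := by simp

theorem ae_exists_tendsto_sum_logFactor (hα : ∀ j p, ‖φ.α j p‖ ≤ 1) (hs : 1 / 2 < s.re) :
    ∀ᵐ ω ∂haarProbability ProdCircle, ∃ l : ℂ, Filter.Tendsto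
      (fun M : ℕ => ∑ i ∈ range M, logFactor φ (nthPrime i) (ω (nthPrime i)) s)
      Filter.atTop (nhds l) := by
  have hs0 : 0 < s.re := by linarith
  have hcont : ∀ p, Continuous fun ω : ProdCircle => logFactor φ p (ω p) s := fun p =>
    (continuous_logFactor hα hs0 p).comp (continuous_apply p)
  have hind : iIndepFun (fun p (ω : ProdCircle) => logFactor φ p (ω p) s)
      (haarProbability ProdCircle) :=
    iIndepFun_eval_haarProbability.comp _ fun p => (continuous_logFactor hα hs0 p).measurable
  set X : ℕ → ProdCircle → ℂ := fun i ω => logFactor φ (nthPrime i) (ω (nthPrime i)) s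
  have hXind : iIndepFun X (haarProbability ProdCircle) := hind.precomp nthPrime_injective
  have hXmeas : ∀ i, StronglyMeasurable (X i) := fun i => (hcont _).stronglyMeasurable
  have hXL2 : ∀ i, MemLp (X i) 2 (haarProbability ProdCircle) := fun i =>
    MemLp.of_bound (hcont _).aestronglyMeasurable _
      (ae_of_all _ fun ω => norm_logFactor_le hα hs0 _ (Circle.norm_coe _).le)
  have hXmean : ∀ i, ∫ ω, X i ω ∂haarProbability ProdCircle = 0 := fun i =>
    integral_logFactor_eval hα hs0 _
  have hXsum : Summable fun i => ∫ ω, ‖X i ω‖ ^ 2 ∂haarProbability ProdCircle :=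
    (summable_integral_norm_logFactor_sq hα hs).comp_injective nthPrime_injective
  exact ae_exists_tendsto_partialSum_of_iIndepFun_complex hXmeas hXind hXL2 hXmean hXsum

end SClassTilde

theorem haarOmega_eq_smul_haarProbability :
    haarOmega = haarOmega Set.univ • haarProbability ProdCircle :=
  have : haarOmega.IsHaarMeasure := by unfold haarOmega; infer_instance
  eq_measure_univ_smul_haarProbability haarOmega

/-- **Kolmogorov-type convergence of the random logarithm.** For `φ ∈ S̃` with
`|α_{j,φ}(p)| ≤ 1` and `Re s > 1/2`:
(a) `E^m[log φ_p(s, ω(p))] = 0` for every prime `p`;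
(b) `∑_p E^m[|log φ_p(s, ω(p))|²] < ∞`;
(c) the series `log φ(s, ω) = ∑_p log φ_p(s, ω(p))` converges for almost every `ω ∈ Ω`. -/
theorem stmt14 (φ : SClassTilde) (hα : ∀ j p, ‖φ.α j p‖ ≤ 1) (s : ℂ) (hs : 1 / 2 < s.re) :
    (∀ p : Nat.Primes,
      (∫ ω : ProdCircle, SClassTilde.logFactor φ p ((ω p : Circle) : ℂ) s ∂haarOmega) = 0) ∧
    (Summable fun p : Nat.Primes =>
      ∫ ω : ProdCircle, ‖SClassTilde.logFactor φ p ((ω p : Circle) : ℂ) s‖ ^ 2 ∂haarOmega) ∧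
    (∀ᵐ ω ∂haarOmega, ∃ l : ℂ,
      Filter.Tendsto (fun M : ℕ => ∑ i ∈ Finset.range M,
          SClassTilde.logFactor φ (nthPrime i) ((ω (nthPrime i) : Circle) : ℂ) s)
        Filter.atTop (nhds l)) := by
  rw [haarOmega_eq_smul_haarProbability]
  simp only [integral_smul_measure]
  refine ⟨fun p => ?_, ?_, Measure.ae_smul_measure ?_ _⟩
  · rw [SClassTilde.integral_logFactor_eval hα (by linarith) p, smul_zero]
  · exact (SClassTilde.summable_integral_norm_logFactor_sq hα hs).const_smul _
  · exact SClassTilde.ae_exists_tendsto_sum_logFactor hα hs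

end
end
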